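/- For every Tamari interval I = [P,Q] of size n (i.e., P ≤ Q in the Tamari lattice on Dyck paths of size n), and for every 0 ≤ i ≤ n, at least one of c_i(P) and d_{n-i}(Q) equals 0, where C(P) = (c_0,...,c_n) is the contact vector of the lower path and D(Q) = (d_0,...,d_n) is the descent vector of the upper path. -/
import Mathlib


/-- A step of a Dyck path: `u` (up) or `d` (down). -/
inductive Step where
  | u : Step
  | d : Step
deriving DecidableEq, Repr

open Step

/-- Number of up steps of a word. -/
def countU (w : List Step) : ℕ := w.count u

/-- Number of down steps of a word. -/
def countD (w : List Step) : ℕ := w.count d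

/-- A word over {u,d} is a Dyck path if it has as many u's as d's and
every prefix has at least as many u's as d's. -/
def IsDyck (w : List Step) : Prop :=
  countU w = countD w ∧ ∀ p : List Step, p <+: w → countD p ≤ countU p

/-- Number of occurrences of the two-letter factor `ab` in `w`. -/
def pairCount (a b : Step) (w : List Step) : ℕ := (w.zip w.tail).count (a, b)

/-- The right-rotation covering relation of the Tamari lattice:
`P = V d P1 W` is turned into `P' = V P1 d W` where `P1` is a non-empty
Dyck path. -/
def Rotation (P P' : List Step) : Prop :=
  ∃ V W P1 : List Step, IsDyck P1 ∧ P1 ≠ [] ∧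
    P = V ++ [Step.d] ++ P1 ++ W ∧ P' = V ++ P1 ++ [Step.d] ++ W

/-- The Tamari order: reflexive-transitive closure of right rotation. -/
def Tamari : List Step → List Step → Prop := Relation.ReflTransGen Rotation

/-- Number of non-empty prefixes of `w` that are Dyck paths
(equivalently, non-initial returns of the walk of `w` to its starting height,
before the walk ever goes below it). -/
noncomputable def dyckPrefixCount (w : List Step) : ℕ :=
  Nat.card {k : Fin w.length // IsDyck (w.take (k + 1))}

/-- Indices (0-based positions) of the up steps of `w`. -/
def upIndexes : List Step → List ℕ
  | [] => []
  | Step.u :: t => 0 :: (upIndexes t).map (· + 1)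
  | _ :: t => (upIndexes t).map (· + 1)

/-- The components of the contact vector of a Dyck path `w`:
`contact w 0` is the number of non-initial contacts of `w` with the `x`-axis,
and for `1 ≤ i`, `contact w i` is the number of non-initial returns to its
starting height of the maximal Dyck subpath following the `i`-th up step. -/
noncomputable def contact (w : List Step) : ℕ → ℕ
  | 0 => dyckPrefixCount w
  | i + 1 => dyckPrefixCount (w.drop ((upIndexes w).getD i 0 + 1))

/-- The contact vector `(c_0, ..., c_n)` of a Dyck path of size `n`. -/
noncomputable def contactVec (w : List Step) : List ℕ :=
  (List.range (countU w + 1)).map (contact w)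

/-- The Dyck word `d^{d_n} u d^{d_{n-1}} u ... u d^{d_0}` encoded by a descent
vector `(d_0, ..., d_n)` (given as the list `[d_0, ..., d_n]`). A Dyck path `Q`
has descent vector `v` (of length `n+1`) iff `wordOfDesc v = Q`. -/
def wordOfDesc : List ℕ → List Step
  | [] => []
  | [a] => List.replicate a Step.d
  | a :: rest => wordOfDesc rest ++ [Step.u] ++ List.replicate a Step.d

/-! ### Auxiliary machinery -/

lemma countU_cons_u (t : List Step) : countU (Step.u :: t) = countU t + 1 := by
  simp [countU, List.count_cons]

lemma countU_cons_d (t : List Step) : countU (Step.d :: t) = countU t := by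
  simp [countU, List.count_cons]

/-- For each up step of `w` (in order), whether the following character is `u`;
`next` is the sentinel character imagined just after the end of `w`. -/
def niaW (next : Step) : List Step → List Bool
  | [] => []
  | Step.u :: t => ((t.headD next) == Step.u) :: niaW next t
  | Step.d :: t => niaW next t

lemma niaW_length (c : Step) (w : List Step) : (niaW c w).length = countU w := by
  induction w with
  | nil => simp [niaW, countU]
  | cons a t ih =>
    cases a
    · simp [niaW, countU_cons_u, ih]
    · simp [niaW, countU_cons_d, ih]

lemma headD_append (t ys : List Step) (c : Step) :
    (t ++ ys).headD c = t.headD (ys.headD c) := by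
  cases t <;> rfl

lemma niaW_append (c : Step) (xs ys : List Step) :
    niaW c (xs ++ ys) = niaW (ys.headD c) xs ++ niaW c ys := by
  induction xs with
  | nil => simp [niaW]
  | cons a t ih =>
    cases a with
    | u => simp only [List.cons_append, niaW, List.append_eq, ih, headD_append]
    | d => simp only [List.cons_append, niaW, List.append_eq, ih]

lemma niaW_concat_d (c : Step) (w : List Step) :
    niaW c (w ++ [Step.d]) = niaW Step.d w := by
  rw [niaW_append]; simp [niaW]

lemma niaW_replicate_d (c : Step) (a : ℕ) :
    niaW c (List.replicate a Step.d) = [] := by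
  induction a with
  | zero => rfl
  | succ a ih => simpa [List.replicate_succ, niaW] using ih

/-- Changing the sentinel to `u` can only turn bits on. -/
lemma niaW_sentinel_mono (w : List Step) (c : Step) (k : ℕ)
    (h : (niaW c w).getD k false = true) : (niaW Step.u w).getD k false = true := by
  induction w generalizing k with
  | nil => simpa [niaW] using h
  | cons a t ih =>
    cases a with
    | u =>
      cases k with
      | zero =>
        simp only [niaW, List.getD_cons_zero] at h ⊢
        cases t <;> simp_all
      | succ k => simp only [niaW, List.getD_cons_succ] at h ⊢; exact ih k h
    | d => exact ih k (by simpa [niaW] using h)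

lemma dyck_head_u {w : List Step} (hw : IsDyck w) (hne : w ≠ []) :
    ∃ t, w = Step.u :: t := by
  cases w with
  | nil => exact absurd rfl hne
  | cons a t =>
    cases a with
    | u => exact ⟨t, rfl⟩
    | d =>
      have := hw.2 [Step.d] ⟨t, rfl⟩
      simp [countU, countD] at this

lemma dyck_last_d {w : List Step} (hw : IsDyck w) (hne : w ≠ []) :
    ∃ t, w = t ++ [Step.d] := by
  rcases w.eq_nil_or_concat with rfl | ⟨t, b, rfl⟩
  · exact absurd rfl hne
  · cases b with
    | d => exact ⟨t, by simp⟩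
    | u =>
      exfalso
      have h1 := hw.1
      have h2 := hw.2 t ⟨[Step.u], by simp⟩
      simp only [List.concat_eq_append, countU, countD, List.count_append] at h1 h2
      simp [List.count_cons] at h1
      omega

/-- Under a rotation, the `niaW` bits can only turn on. -/
lemma rotation_niaW_mono {P P' : List Step} (h : Rotation P P') (k : ℕ)
    (hk : (niaW Step.d P).getD k false = true) :
    (niaW Step.d P').getD k false = true := by
  obtain ⟨V, W, P1, hDyck, hne, rfl, rfl⟩ := h
  obtain ⟨P1', rfl⟩ := dyck_last_d hDyck hne
  obtain ⟨t, ht⟩ := dyck_head_u hDyck hne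
  have hP : niaW Step.d (V ++ [Step.d] ++ (P1' ++ [Step.d]) ++ W)
      = niaW Step.d V ++ (niaW Step.d P1' ++ niaW Step.d W) := by
    rw [show V ++ [Step.d] ++ (P1' ++ [Step.d]) ++ W
        = V ++ (Step.d :: (P1' ++ Step.d :: W)) from by simp]
    rw [niaW_append]
    show niaW Step.d V ++ niaW Step.d (P1' ++ Step.d :: W) = _
    rw [niaW_append]
    rfl
  have hhd : ∀ X : List Step, (P1' ++ [Step.d] ++ X).headD Step.d = Step.u := by
    intro X
    rw [ht]; rfl
  have hP'eq : niaW Step.d (V ++ (P1' ++ [Step.d]) ++ [Step.d] ++ W)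
      = niaW Step.u V ++ (niaW Step.d P1' ++ niaW Step.d W) := by
    rw [show V ++ (P1' ++ [Step.d]) ++ [Step.d] ++ W
        = V ++ (P1' ++ [Step.d] ++ (Step.d :: W)) from by simp]
    rw [niaW_append, hhd (Step.d :: W)]
    rw [show P1' ++ [Step.d] ++ (Step.d :: W) = P1' ++ (Step.d :: Step.d :: W) from by simp]
    rw [niaW_append]
    rfl
  rw [hP] at hk
  rw [hP'eq]
  have hlen : (niaW Step.d V).length = (niaW Step.u V).length := by
    rw [niaW_length, niaW_length]
  rcases Nat.lt_or_ge k (niaW Step.d V).length with hlt | hge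
  · rw [List.getD_append _ _ _ _ hlt] at hk
    rw [List.getD_append _ _ _ _ (hlen ▸ hlt)]
    exact niaW_sentinel_mono V Step.d k hk
  · rw [List.getD_append_right _ _ _ _ hge] at hk
    rw [List.getD_append_right _ _ _ _ (hlen ▸ hge), ← hlen]
    exact hk

lemma tamari_niaW_mono {P Q : List Step} (h : Tamari P Q) (k : ℕ)
    (hk : (niaW Step.d P).getD k false = true) :
    (niaW Step.d Q).getD k false = true := by
  induction h with
  | refl => exact hk
  | tail _ hstep ih => exact rotation_niaW_mono hstep k ih

lemma upIndexes_length (w : List Step) : (upIndexes w).length = countU w := by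
  induction w with
  | nil => simp [upIndexes, countU]
  | cons a t ih =>
    cases a
    · simp [upIndexes, countU_cons_u, ih]
    · simp [upIndexes, countU_cons_d, ih]

lemma dyckPrefixCount_nil : dyckPrefixCount [] = 0 := by
  have : IsEmpty {k : Fin ([] : List Step).length // IsDyck (([] : List Step).take (k + 1))} :=
    ⟨fun ⟨k, _⟩ => k.elim0⟩
  exact Nat.card_of_isEmpty

lemma dyckPrefixCount_cons_d (t : List Step) : dyckPrefixCount (Step.d :: t) = 0 := by
  have : IsEmpty {k : Fin (Step.d :: t).length // IsDyck ((Step.d :: t).take (k + 1))} := by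
    constructor
    rintro ⟨k, hk⟩
    have hpre : [Step.d] <+: (Step.d :: t).take (k + 1) := by
      rw [List.take_succ_cons]
      exact ⟨t.take k, rfl⟩
    have := hk.2 [Step.d] hpre
    simp [countU, countD] at this
  exact Nat.card_of_isEmpty

/-- If the bit of the `j`-th up step is off, the corresponding contact count is 0. -/
lemma contact_zero_of_bit_false (w : List Step) (j : ℕ) (hj : j < countU w)
    (h : (niaW Step.d w).getD j false = false) :
    dyckPrefixCount (w.drop ((upIndexes w).getD j 0 + 1)) = 0 := by
  induction w generalizing j with
  | nil => simp [countU] at hj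
  | cons a t ih =>
    cases a with
    | u =>
      cases j with
      | zero =>
        simp only [upIndexes, List.getD_cons_zero]
        show dyckPrefixCount t = 0
        simp only [niaW, List.getD_cons_zero] at h
        cases t with
        | nil => exact dyckPrefixCount_nil
        | cons s t' =>
          cases s with
          | u => simp at h
          | d => exact dyckPrefixCount_cons_d t'
      | succ j =>
        have hj' : j < countU t := by rw [countU_cons_u] at hj; omega
        have hjlen : j < (upIndexes t).length := by rw [upIndexes_length]; exact hj'
        have hpos : (upIndexes (Step.u :: t)).getD (j + 1) 0
            = (upIndexes t).getD j 0 + 1 := by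
          simp only [upIndexes, List.getD_cons_succ]
          rw [List.getD_eq_getElem _ _ (by simpa using hjlen), List.getElem_map,
            List.getD_eq_getElem _ _ hjlen]
        rw [hpos]
        simp only [niaW, List.getD_cons_succ] at h
        simpa using ih j hj' h
    | d =>
      have hj' : j < countU t := by rwa [countU_cons_d] at hj
      have hjlen : j < (upIndexes t).length := by rw [upIndexes_length]; exact hj'
      have hpos : (upIndexes (Step.d :: t)).getD j 0 = (upIndexes t).getD j 0 + 1 := by
        simp only [upIndexes]
        rw [List.getD_eq_getElem _ _ (by simpa using hjlen), List.getElem_map,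
          List.getD_eq_getElem _ _ hjlen]
      rw [hpos]
      simp only [niaW] at h
      simpa using ih j hj' h

lemma countU_wordOfDesc (v : List ℕ) (hne : v ≠ []) :
    countU (wordOfDesc v) = v.length - 1 := by
  induction v with
  | nil => exact absurd rfl hne
  | cons a rest ih =>
    cases rest with
    | nil => simp [wordOfDesc, countU, List.count_replicate]
    | cons b r =>
      have h1 : countU (wordOfDesc (b :: r)) = (b :: r).length - 1 := ih (by simp)
      simp only [wordOfDesc, countU, List.count_append, List.count_replicate] at h1 ⊢
      simp [h1]

/-- Nonzero descent entries give an off bit in `niaW` of the descent word. -/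
lemma wordOfDesc_bit_false (v : List ℕ) (c : Step) (j : ℕ) (hj : j + 2 ≤ v.length)
    (hv : v.getD j 0 ≠ 0) :
    (niaW c (wordOfDesc v)).getD (v.length - 2 - j) false = false := by
  induction v generalizing c j with
  | nil => simp at hj
  | cons a rest ih =>
    cases rest with
    | nil => simp at hj
    | cons b r =>
      have hsplit : wordOfDesc (a :: b :: r)
          = wordOfDesc (b :: r) ++ (Step.u :: List.replicate a Step.d) := by
        simp [wordOfDesc]
      rw [hsplit, niaW_append]
      have hbit : niaW c (Step.u :: List.replicate a Step.d)
          = [((List.replicate a Step.d).headD c == Step.u)] := by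
        show ((List.replicate a Step.d).headD c == Step.u)
            :: niaW c (List.replicate a Step.d) = _
        rw [niaW_replicate_d]
      have hhd : (Step.u :: List.replicate a Step.d).headD c = Step.u := rfl
      rw [hhd, hbit]
      have hlen : (niaW Step.u (wordOfDesc (b :: r))).length = (b :: r).length - 1 := by
        rw [niaW_length, countU_wordOfDesc _ (by simp)]
      cases j with
      | zero =>
        have hidx : (a :: b :: r).length - 2 - 0
            = (niaW Step.u (wordOfDesc (b :: r))).length := by
          rw [hlen]; simp
        rw [hidx, List.getD_append_right _ _ _ _ (le_refl _)]
        simp only [Nat.sub_self, List.getD_cons_zero]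
        have ha : a ≠ 0 := by simpa using hv
        obtain ⟨a', rfl⟩ := Nat.exists_eq_succ_of_ne_zero ha
        simp [List.replicate_succ]
      | succ j =>
        have hj2 : j + 2 ≤ (b :: r).length := by simpa using hj
        have hv' : (b :: r).getD j 0 ≠ 0 := by simpa using hv
        have hidx : (a :: b :: r).length - 2 - (j + 1) = (b :: r).length - 2 - j := by
          simp only [List.length_cons]; omega
        have hlt : (b :: r).length - 2 - j < (niaW Step.u (wordOfDesc (b :: r))).length := by
          rw [hlen]; simp only [List.length_cons] at hj2 ⊢; omega
        rw [hidx, List.getD_append _ _ _ _ hlt]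
        exact ih Step.u j hj2 hv'

/-- If the last descent entry is nonzero, the word starts with a down step. -/
lemma wordOfDesc_head_d (v : List ℕ) (j : ℕ) (hj : j + 1 = v.length)
    (hv : v.getD j 0 ≠ 0) : ∃ t, wordOfDesc v = Step.d :: t := by
  induction v generalizing j with
  | nil => simp at hj
  | cons a rest ih =>
    cases rest with
    | nil =>
      have hj0 : j = 0 := by simpa using hj
      subst hj0
      have ha : a ≠ 0 := by simpa using hv
      obtain ⟨a', rfl⟩ := Nat.exists_eq_succ_of_ne_zero ha
      exact ⟨List.replicate a' Step.d, by simp [wordOfDesc, List.replicate_succ]⟩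
    | cons b r =>
      obtain ⟨j', rfl⟩ : ∃ j', j = j' + 1 := by
        cases j with
        | zero => simp at hj
        | succ j' => exact ⟨j', rfl⟩
      obtain ⟨t, ht⟩ := ih j' (by simpa using hj) (by simpa using hv)
      refine ⟨t ++ [Step.u] ++ List.replicate a Step.d, ?_⟩
      simp [wordOfDesc, ht]

/-- For every Tamari interval `[P, Q]` of size `n` and every
`0 ≤ i ≤ n`, at least one of `c_i(P)` and `d_{n-i}(Q)` is zero, where
`v = (d_0, ..., d_n)` is the descent vector of the upper path `Q`. -/
theorem contact_or_descent_zero (n : ℕ) (P Q : List Step) (v : List ℕ)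
    (hP : IsDyck P) (hQ : IsDyck Q) (hPn : countU P = n)
    (hPQ : Tamari P Q) (hv : v.length = n + 1) (hvQ : wordOfDesc v = Q) :
    ∀ i ≤ n, contact P i = 0 ∨ v.getD (n - i) 0 = 0 := by
  intro i hi
  by_contra hcon
  push_neg at hcon
  obtain ⟨hc, hd⟩ := hcon
  cases i with
  | zero =>
    obtain ⟨t, ht⟩ := wordOfDesc_head_d v n (by omega) (by simpa using hd)
    rw [hvQ] at ht
    have := hQ.2 [Step.d] (by rw [ht]; exact ⟨t, rfl⟩)
    simp [countU, countD] at this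
  | succ i' =>
    have hbitP : (niaW Step.d P).getD i' false = true := by
      by_contra hb
      have hb' : (niaW Step.d P).getD i' false = false := by
        cases hx : (niaW Step.d P).getD i' false
        · rfl
        · exact absurd hx hb
      have := contact_zero_of_bit_false P i' (by omega) hb'
      exact hc (by simpa [contact] using this)
    have hbitQ := tamari_niaW_mono hPQ i' hbitP
    have hf := wordOfDesc_bit_false v Step.d (n - (i' + 1)) (by omega) hd
    have hidx : v.length - 2 - (n - (i' + 1)) = i' := by omega
    rw [hidx, hvQ] at hf
    rw [hf] at hbitQ
    exact Bool.false_ne_true hbitQ
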